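/- arXiv:1908.01337 — 3 statements merged into one kernel-verified Lean document; each statement's English description precedes it below -/
import Mathlib

section
/- Let Φ be a finite root system with affine root system Φ̂, let S ⊂ Φ be a strongly orthogonal subset such that Σ_{β∈S} |⟨η, β^∨⟩| ≤ 3 for every root η ∈ Φ (i.e., the nilpotent e_S has height at most 3), and set Ŝ = {β − δ : β ∈ S}. If α ∈ Φ̂ satisfies σ_Ŝ(α) = −α, where σ_Ŝ = Π_{β∈S} s_{β−δ}, then α = ½(±β ± β′) for some β, β′ ∈ Ŝ. -/
open scoped Classical RealInnerProductSpace

/-- The pairing `⟨γ, α^∨⟩ = 2(γ,α)/(α,α)`. -/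
noncomputable def pairing {V : Type*} [NormedAddCommGroup V] [InnerProductSpace ℝ V]
    (γ α : V) : ℝ :=
  2 * ⟪γ, α⟫ / ⟪α, α⟫

/-- A finite (crystallographic, reduced) root system in a Euclidean space. -/
structure IsRootSystem {V : Type*} [NormedAddCommGroup V] [InnerProductSpace ℝ V]
    (Φ : Set V) : Prop where
  finite : Φ.Finite
  ne_zero : ∀ α ∈ Φ, α ≠ 0
  neg_mem : ∀ α ∈ Φ, -α ∈ Φ
  reflect_mem : ∀ α ∈ Φ, ∀ β ∈ Φ, β - pairing β α • α ∈ Φ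
  crystal : ∀ α ∈ Φ, ∀ β ∈ Φ, ∃ n : ℤ, pairing β α = n
  reduced : ∀ α ∈ Φ, ∀ t : ℝ, t • α ∈ Φ → t = 1 ∨ t = -1

/-- Irreducibility of a root system: no nontrivial orthogonal decomposition. -/
def IsIrreducibleRS {V : Type*} [NormedAddCommGroup V] [InnerProductSpace ℝ V]
    (Φ : Set V) : Prop :=
  ∀ Φ₁ Φ₂ : Set V, Φ = Φ₁ ∪ Φ₂ → (∀ α ∈ Φ₁, ∀ β ∈ Φ₂, ⟪α, β⟫ = 0) → Φ₁ = ∅ ∨ Φ₂ = ∅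

/-- A set of roots is strongly orthogonal if for any two distinct elements neither the sum
nor the difference is a root. -/
def StronglyOrthogonal {V : Type*} [NormedAddCommGroup V] [InnerProductSpace ℝ V]
    (Φ : Set V) (S : Set V) : Prop :=
  ∀ α ∈ S, ∀ β ∈ S, α ≠ β → α + β ∉ Φ ∧ α - β ∉ Φ

/-- A set of pairwise orthogonal vectors. -/
def OrthogonalSet {V : Type*} [NormedAddCommGroup V] [InnerProductSpace ℝ V]
    (S : Set V) : Prop :=
  ∀ α ∈ S, ∀ β ∈ S, α ≠ β → ⟪α, β⟫ = 0

/-- A base (set of simple roots) of a root system. -/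
structure IsBase {V : Type*} [NormedAddCommGroup V] [InnerProductSpace ℝ V]
    (Φ : Set V) (Δ : Finset V) : Prop where
  subset : ↑Δ ⊆ Φ
  indep : LinearIndependent ℝ (fun b : Δ => (b : V))
  pos_or_neg : ∀ α ∈ Φ, (∃ c : V → ℕ, α = ∑ b ∈ Δ, (c b : ℝ) • b) ∨
    (∃ c : V → ℕ, -α = ∑ b ∈ Δ, (c b : ℝ) • b)

/-- The positive roots with respect to a base. -/
def PosRoots {V : Type*} [NormedAddCommGroup V] [InnerProductSpace ℝ V]
    (Φ : Set V) (Δ : Finset V) : Set V :=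
  {α | α ∈ Φ ∧ ∃ c : V → ℕ, α = ∑ b ∈ Δ, (c b : ℝ) • b}

/-- `θ` is the highest root of `Φ` with respect to the base `Δ`. -/
def IsHighestRoot {V : Type*} [NormedAddCommGroup V] [InnerProductSpace ℝ V]
    (Φ : Set V) (Δ : Finset V) (θ : V) : Prop :=
  θ ∈ Φ ∧ ∀ α ∈ Φ, ∃ c : V → ℕ, θ - α = ∑ b ∈ Δ, (c b : ℝ) • b

/-- The coroot of the real affine root `(β, n) = β + nδ`, as a linear functional on the affine
root space `V × ℝδ` (it kills `δ`). -/
noncomputable def acoroot {V : Type*} [NormedAddCommGroup V] [InnerProductSpace ℝ V]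
    (β : V) : (V × ℝ) →ₗ[ℝ] ℝ :=
  (2 / ⟪β, β⟫) • ((innerSL ℝ β).toLinearMap ∘ₗ LinearMap.fst ℝ V ℝ)

/-- The reflection of the affine Weyl group corresponding to the real affine root
`β + nδ`, acting linearly on the affine root space `V ⊕ ℝδ`. -/
noncomputable def sAff {V : Type*} [NormedAddCommGroup V] [InnerProductSpace ℝ V]
    (β : V) (n : ℝ) : Module.End ℝ (V × ℝ) :=
  LinearMap.id - LinearMap.smulRight (acoroot β) ((β, n) : V × ℝ)

/-- The set of reflections of the affine Weyl group of `Φ`. -/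
def AffRefls {V : Type*} [NormedAddCommGroup V] [InnerProductSpace ℝ V]
    (Φ : Set V) : Set (Module.End ℝ (V × ℝ)) :=
  {f | ∃ β ∈ Φ, ∃ n : ℤ, f = sAff β (n : ℝ)}

/-- The positive real affine roots `α + nδ` with `n > 0`, or `n = 0` and `α` positive. -/
def PosAffRoots {V : Type*} [NormedAddCommGroup V] [InnerProductSpace ℝ V]
    (Φ : Set V) (Δ : Finset V) : Set (V × ℝ) :=
  {p | p.1 ∈ Φ ∧ (∃ n : ℤ, p.2 = (n : ℝ)) ∧
    (0 < p.2 ∨ (p.2 = 0 ∧ p.1 ∈ PosRoots Φ Δ))}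

/-- Length of an element of the affine Weyl group: the number of positive real affine roots
sent to negative ones. -/
noncomputable def affLength {V : Type*} [NormedAddCommGroup V] [InnerProductSpace ℝ V]
    (Φ : Set V) (Δ : Finset V) (w : Module.End ℝ (V × ℝ)) : ℕ :=
  {p | p ∈ PosAffRoots Φ Δ ∧ -(w p) ∈ PosAffRoots Φ Δ}.ncard

/-- Bruhat order on the affine Weyl group: `u ≤ w` iff `w` is obtained from `u` by a chain of
right multiplications by reflections, each increasing the length. -/
def bruhatLE {V : Type*} [NormedAddCommGroup V] [InnerProductSpace ℝ V]
    (Φ : Set V) (Δ : Finset V) (u w : Module.End ℝ (V × ℝ)) : Prop :=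
  Relation.ReflTransGen
    (fun a b => (∃ t ∈ AffRefls Φ, b = a * t) ∧ affLength Φ Δ a < affLength Φ Δ b) u w

/-- Strict Bruhat order. -/
def bruhatLT {V : Type*} [NormedAddCommGroup V] [InnerProductSpace ℝ V]
    (Φ : Set V) (Δ : Finset V) (u w : Module.End ℝ (V × ℝ)) : Prop :=
  bruhatLE Φ Δ u w ∧ u ≠ w

/-- The simple affine roots `Δ ∪ {δ - θ}`, as elements of `V × ℝδ`. -/
def SimpleAffRoots {V : Type*} [NormedAddCommGroup V] [InnerProductSpace ℝ V]
    (Δ : Finset V) (θ : V) : Set (V × ℝ) :=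
  (fun b => ((b, (0 : ℝ)) : V × ℝ)) '' ↑Δ ∪ {((-θ, (1 : ℝ)) : V × ℝ)}

/-- The Richardson–Springer monoid operation `s ∘ σ` on involutions. -/
noncomputable def rsCirc {V : Type*} [NormedAddCommGroup V] [InnerProductSpace ℝ V]
    (s σ : Module.End ℝ (V × ℝ)) : Module.End ℝ (V × ℝ) :=
  if s * σ = σ * s then s * σ else s * σ * s

/-- The affine root system `Φ̂ = (Φ + ℤδ) ∪ (±ℕδ ∖ {0})`, realized in `V × ℝδ`. -/
def AffRoots {V : Type*} [NormedAddCommGroup V] [InnerProductSpace ℝ V]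
    (Φ : Set V) : Set (V × ℝ) :=
  {p | (p.1 ∈ Φ ∧ ∃ n : ℤ, p.2 = (n : ℝ)) ∨ (p.1 = 0 ∧ ∃ n : ℤ, n ≠ 0 ∧ p.2 = (n : ℝ))}

/-!
Commuting reflections `s_{β-δ}` force the roots of `S` to be pairwise orthogonal, so
`σ_Ŝ(α) = α - ∑_{β ∈ S} ⟨α, β^∨⟩ (β - δ)` and `σ_Ŝ(α) = -α` says `2α = ∑ c_β (β - δ)` with
`c_β = ⟨α, β^∨⟩`. Imaginary roots are fixed by `σ_Ŝ`, so `α` is real and the `c_β` are integers.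
Comparing `δ`-coefficients, `∑ c_β` is even, hence so is `∑ |c_β|`; it is at most `3` by the
height bound and nonzero since `α ∉ ℝδ`. So `∑ |c_β| = 2`, i.e. `2α = ±(β - δ) ± (β' - δ)`.
-/

open Finset

section IntegerCombination

variable {ι M : Type*} [AddCommGroup M] [Module ℝ M] (S : Finset ι) (v : ι → M)

lemma two_dvd_sum_abs_sub_sum (c : ι → ℤ) : 2 ∣ ∑ x ∈ S, |c x| - ∑ x ∈ S, c x := by
  rw [← sum_sub_distrib]
  refine dvd_sum fun x _ => ?_
  rcases abs_choice (c x) with h | h <;> rw [h] <;> omega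

lemma sum_abs_eq_two_of_even_sum (c : ι → ℤ) (hle : ∑ x ∈ S, |c x| ≤ 3)
    (heven : Even (∑ x ∈ S, c x)) (hne : ∃ i ∈ S, c i ≠ 0) : ∑ x ∈ S, |c x| = 2 := by
  obtain ⟨i, hi, hci⟩ := hne
  have hpos : 0 < ∑ x ∈ S, |c x| :=
    lt_of_lt_of_le (abs_pos.2 hci) (single_le_sum (fun x _ => abs_nonneg (c x)) hi)
  obtain ⟨r, hr⟩ := heven
  have := two_dvd_sum_abs_sub_sum S c
  omega

lemma sum_smul_eq_zero_of_sum_abs_eq_zero (c : ι → ℤ) (h : ∑ x ∈ S, |c x| = 0) :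
    ∑ x ∈ S, (c x : ℝ) • v x = 0 := by
  refine sum_eq_zero fun x hx => ?_
  have := (sum_eq_zero_iff_of_nonneg fun x _ => abs_nonneg (c x)).1 h x hx
  simp [abs_eq_zero.1 this]

lemma exists_sign_smul_add_of_ne_zero [DecidableEq ι] (c : ι → ℤ) {i : ι} (hi : i ∈ S)
    (hci : c i ≠ 0) :
    ∃ ε : ℝ, (ε = 1 ∨ ε = -1) ∧ ∃ d : ι → ℤ, ∑ x ∈ S, |d x| + 1 = ∑ x ∈ S, |c x| ∧
      ∑ x ∈ S, (c x : ℝ) • v x = ε • v i + ∑ x ∈ S, (d x : ℝ) • v x := by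
  obtain ⟨ε, hε, habs⟩ : ∃ ε : ℤ, (ε = 1 ∨ ε = -1) ∧ |c i - ε| + 1 = |c i| := by
    rcases lt_or_gt_of_ne hci with h | h
    · exact ⟨-1, Or.inr rfl, by rw [abs_of_neg h, abs_of_nonpos (by omega)]; omega⟩
    · exact ⟨1, Or.inl rfl, by rw [abs_of_pos h, abs_of_nonneg (by omega)]; omega⟩
  set d := Function.update c i (c i - ε)
  have hrest : ∀ x ∈ S.erase i, d x = c x := fun x hx =>
    Function.update_of_ne (ne_of_mem_erase hx) _ _
  have hdi : d i = c i - ε := Function.update_self ..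
  refine ⟨ε, by rcases hε with rfl | rfl <;> norm_num, d, ?_, ?_⟩
  · rw [← add_sum_erase S _ hi, ← add_sum_erase S (fun x => |c x|) hi, hdi,
      sum_congr rfl fun x hx => by rw [hrest x hx]]
    omega
  · rw [← add_sum_erase S _ hi, ← add_sum_erase S (fun x => (d x : ℝ) • v x) hi, hdi,
      (sum_congr rfl fun x hx => by rw [hrest x hx] :
        ∑ x ∈ S.erase i, (d x : ℝ) • v x = ∑ x ∈ S.erase i, (c x : ℝ) • v x)]
    push_cast
    module

lemma exists_ne_zero_of_sum_smul_ne_zero (c : ι → ℤ) (h : ∑ x ∈ S, (c x : ℝ) • v x ≠ 0) :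
    ∃ i ∈ S, c i ≠ 0 := by
  obtain ⟨i, hi, hne⟩ := exists_ne_zero_of_sum_ne_zero h
  exact ⟨i, hi, fun h0 => hne (by simp [h0])⟩

lemma exists_sum_smul_eq_of_sum_abs_eq_two (c : ι → ℤ) (h : ∑ x ∈ S, |c x| = 2) :
    ∃ i ∈ S, ∃ j ∈ S, ∃ ε ε' : ℝ, (ε = 1 ∨ ε = -1) ∧ (ε' = 1 ∨ ε' = -1) ∧
      ∑ x ∈ S, (c x : ℝ) • v x = ε • v i + ε' • v j := by
  classical
  obtain ⟨i, hi, hci⟩ := exists_ne_zero_of_sum_ne_zero (h.trans_ne two_ne_zero)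
  obtain ⟨ε, hε, d, hd, hcd⟩ := exists_sign_smul_add_of_ne_zero S v c hi (abs_ne_zero.1 hci)
  obtain ⟨j, hj, hdj⟩ := exists_ne_zero_of_sum_ne_zero (s := S) (f := fun x => |d x|) (by omega)
  obtain ⟨ε', hε', e, he, hde⟩ := exists_sign_smul_add_of_ne_zero S v d hj (abs_ne_zero.1 hdj)
  refine ⟨i, hi, j, hj, ε, ε', hε, hε', ?_⟩
  rw [hcd, hde, sum_smul_eq_zero_of_sum_abs_eq_zero S v e (by omega), add_zero]

end IntegerCombination

section AffineReflection

variable {V : Type*} [NormedAddCommGroup V] [InnerProductSpace ℝ V]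

lemma acoroot_apply (β : V) (p : V × ℝ) : acoroot β p = pairing p.1 β := by
  simp only [acoroot, pairing, LinearMap.smul_apply, LinearMap.comp_apply, LinearMap.fst_apply,
    ContinuousLinearMap.coe_coe, innerSL_apply_apply, smul_eq_mul, real_inner_comm]
  ring

lemma sAff_apply (β : V) (n : ℝ) (p : V × ℝ) : sAff β n p = p - acoroot β p • (β, n) := rfl

lemma acoroot_eq_zero_of_inner_eq_zero {a b : V} (n : ℝ) (h : ⟪a, b⟫ = 0) :
    acoroot a (b, n) = 0 := by
  simp [acoroot, h]

lemma pairing_self {β : V} (hβ : β ≠ 0) : pairing β β = 2 := by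
  rw [pairing]
  field_simp [inner_self_ne_zero.2 hβ]

lemma inner_eq_zero_of_pairing_eq_zero {a b : V} (h : pairing b a = 0) : ⟪a, b⟫ = 0 := by
  rw [pairing, div_eq_zero_iff, mul_eq_zero] at h
  rcases h with (h | h) | h
  · norm_num at h
  · rw [real_inner_comm, h]
  · rw [inner_self_eq_zero.1 h, inner_zero_left]

/-- Unlike in the finite Weyl group, this also rules out `b = -a`: the `δ`-components of
`s_{a+nδ} s_{b+nδ}` and `s_{b+nδ} s_{a+nδ}` differ unless `a ⊥ b`. -/
lemma inner_eq_zero_of_commute_sAff {a b : V} {n : ℝ} (hn : n ≠ 0) (hab : a ≠ b)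
    (h : Commute (sAff a n) (sAff b n)) : ⟪a, b⟫ = 0 := by
  rcases eq_or_ne b 0 with rfl | hb
  · exact inner_zero_right a
  refine inner_eq_zero_of_pairing_eq_zero (by_contra fun hk => ?_)
  have key := LinearMap.congr_fun h.eq (b, 0)
  simp only [Module.End.mul_apply, sAff_apply, map_sub, map_smul, acoroot_apply,
    pairing_self hb] at key
  set k := pairing b a
  set m := pairing a b
  have hm : m = 2 := by
    have h2 := congrArg Prod.snd key
    simp only [Prod.snd_sub, Prod.smul_snd, smul_eq_mul] at h2
    have : k * n * (m - 2) = 0 := by linear_combination -h2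
    simpa [hk, hn, sub_eq_zero] using this
  have h1 := congrArg Prod.fst key
  simp only [Prod.fst_sub, Prod.smul_fst, hm] at h1
  have : (2 * k) • (a - b) = 0 := by linear_combination (norm := module) h1
  simp [hk, sub_eq_zero, hab] at this

lemma noncommProd_sAff_apply (S : Finset V) (n : ℝ)
    (hc : (S : Set V).Pairwise fun a b => Commute (sAff a n) (sAff b n))
    (horth : (S : Set V).Pairwise fun a b => ⟪a, b⟫ = 0) (p : V × ℝ) :
    S.noncommProd (fun β => sAff β n) hc p = p - ∑ β ∈ S, acoroot β p • (β, n) := by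
  induction S using Finset.induction_on with
  | empty => simp
  | @insert a s ha ih =>
    have hs : (s : Set V).Pairwise fun a b => ⟪a, b⟫ = 0 :=
      horth.mono (coe_subset.2 (subset_insert a s))
    have hperp : ∑ β ∈ s, acoroot β p • acoroot a (β, n) = 0 :=
      sum_eq_zero fun β hβ => by
        rw [acoroot_eq_zero_of_inner_eq_zero n (horth (mem_insert_self a s)
          (mem_insert_of_mem hβ) fun h => ha (h ▸ hβ)), smul_zero]
    rw [noncommProd_insert_of_notMem _ _ _ _ ha, Module.End.mul_apply, ih _ hs, sAff_apply,
      map_sub, map_sum, sum_insert ha]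
    simp only [map_smul, hperp, sub_zero]
    abel

lemma two_smul_eq_sum_of_noncommProd_sAff_apply_eq_neg (S : Finset V) {n : ℝ} (hn : n ≠ 0)
    (hc : (S : Set V).Pairwise fun a b => Commute (sAff a n) (sAff b n)) {α : V × ℝ}
    (hfix : S.noncommProd (fun β => sAff β n) hc α = -α) :
    (2 : ℝ) • α = ∑ β ∈ S, acoroot β α • (β, n) := by
  rw [noncommProd_sAff_apply S n hc
    (fun a ha b hb hab => inner_eq_zero_of_commute_sAff hn hab (hc ha hb hab))] at hfix
  linear_combination (norm := module) hfix

lemma eq_zero_of_two_smul_eq_sum_of_fst_eq_zero (S : Finset V) (n : ℝ) {α : V × ℝ}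
    (hα : α.1 = 0) (h : (2 : ℝ) • α = ∑ β ∈ S, acoroot β α • (β, n)) : α = 0 := by
  simp only [acoroot_apply, hα, pairing, inner_zero_left, mul_zero, zero_div, zero_smul,
    sum_const_zero] at h
  exact (smul_eq_zero.1 h).resolve_left two_ne_zero

lemma even_sum_of_two_smul_eq_sum (S : Finset V) (c : V → ℤ) {α : V × ℝ}
    (h : (2 : ℝ) • α = ∑ β ∈ S, (c β : ℝ) • (β, (-1 : ℝ))) {n : ℤ} (hn : α.2 = n) :
    Even (∑ β ∈ S, c β) := by
  have h2 := congrArg Prod.snd h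
  simp only [Prod.smul_snd, Prod.snd_sum, smul_eq_mul, mul_neg_one, sum_neg_distrib, hn] at h2
  exact ⟨-n, by exact_mod_cast (by push_cast; linarith : ((∑ β ∈ S, c β : ℤ) : ℝ) = -n + -n)⟩

end AffineReflection

theorem stmt5_general {V : Type*} [NormedAddCommGroup V] [InnerProductSpace ℝ V]
    (Φ : Set V) (hΦ : IsRootSystem Φ)
    (S : Finset V) (hSΦ : ↑S ⊆ Φ)
    (hheight : ∀ η ∈ Φ, ∑ β ∈ S, |pairing η β| ≤ 3)
    (hc : (↑S : Set V).Pairwise fun a b => Commute (sAff a (-1)) (sAff b (-1)))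
    (α : V × ℝ) (hα : α ∈ AffRoots Φ)
    (hfix : (S.noncommProd (fun β => sAff β (-1)) hc) α = -α) :
    ∃ β ∈ S, ∃ β' ∈ S, ∃ ε ε' : ℝ, (ε = 1 ∨ ε = -1) ∧ (ε' = 1 ∨ ε' = -1) ∧
      α = (1 / 2 : ℝ) • (ε • ((β, (-1 : ℝ)) : V × ℝ) + ε' • ((β', (-1 : ℝ)) : V × ℝ)) := by
  have h2α := two_smul_eq_sum_of_noncommProd_sAff_apply_eq_neg S (by norm_num) hc hfix
  rcases hα with ⟨hα1, n, hn⟩ | ⟨hα1, n, hn0, hn⟩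
  · choose! c hcoef using fun β (hβ : β ∈ S) => hΦ.crystal β (hSΦ hβ) α.1 hα1
    rw [sum_congr rfl fun β hβ => by rw [acoroot_apply, hcoef β hβ]] at h2α
    have hle : ∑ β ∈ S, |c β| ≤ 3 := by
      have := hheight α.1 hα1
      rw [sum_congr rfl fun β hβ => by rw [hcoef β hβ]] at this
      exact_mod_cast this
    have htwo := sum_abs_eq_two_of_even_sum S c hle (even_sum_of_two_smul_eq_sum S c h2α hn)
      (exists_ne_zero_of_sum_smul_ne_zero S _ c fun h0 =>
        hΦ.ne_zero _ hα1 (by simpa using congrArg Prod.fst (h2α.trans h0)))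
    obtain ⟨β, hβ, β', hβ', ε, ε', hε, hε', hsum⟩ :=
      exists_sum_smul_eq_of_sum_abs_eq_two S (fun β => (β, (-1 : ℝ))) c htwo
    refine ⟨β, hβ, β', hβ', ε, ε', hε, hε', ?_⟩
    rw [← hsum, ← h2α, smul_smul]
    norm_num
  · have hα0 := eq_zero_of_two_smul_eq_sum_of_fst_eq_zero S _ hα1 h2α
    rw [hα0, Prod.snd_zero] at hn
    exact (hn0 (by exact_mod_cast hn.symm)).elim

/-- if `S ⊆ Φ` is strongly orthogonal with `height(e_S) ≤ 3` and
`σ_Ŝ(α) = -α` for an affine root `α`, where `Ŝ = {β - δ : β ∈ S}`, then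
`α = ½(±β ± β′)` with `β, β′ ∈ Ŝ`. -/
theorem stmt5 {V : Type*} [NormedAddCommGroup V] [InnerProductSpace ℝ V]
    (Φ : Set V) (hΦ : IsRootSystem Φ)
    (S : Finset V) (hSΦ : ↑S ⊆ Φ) (hso : StronglyOrthogonal Φ ↑S)
    (hheight : ∀ η ∈ Φ, ∑ β ∈ S, |pairing η β| ≤ 3)
    (hc : (↑S : Set V).Pairwise fun a b => Commute (sAff a (-1)) (sAff b (-1)))
    (α : V × ℝ) (hα : α ∈ AffRoots Φ)
    (hfix : (S.noncommProd (fun β => sAff β (-1)) hc) α = -α) :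
    ∃ β ∈ S, ∃ β' ∈ S, ∃ ε ε' : ℝ, (ε = 1 ∨ ε = -1) ∧ (ε' = 1 ∨ ε' = -1) ∧
      α = (1 / 2 : ℝ) • (ε • ((β, (-1 : ℝ)) : V × ℝ) + ε' • ((β', (-1 : ℝ)) : V × ℝ)) :=
  stmt5_general Φ hΦ S hSΦ hheight hc α hα hfix
end

section
/- Let Φ be an irreducible root system not of simply laced type with an abelian nilradical Ψ (type B_n with Ψ = {ε_1, ε_1 ± ε_j : 2 ≤ j ≤ n}, or type C_n with Ψ = {ε_i + ε_j : 1 ≤ i ≤ j ≤ n}). If S ⊂ Ψ is an orthogonal subset containing the highest short root θ_s of Ψ, then S′ = (S ∖ {θ_s}) ∪ {θ, 2θ_s − θ} is an orthogonal subset of Ψ containing one fewer short root and two more long roots, where θ is the highest root. -/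
/-!
Every root of `Ψ` orthogonal to `θ_s` is orthogonal to both `θ` and `μ = 2θ_s - θ` (vacuously in
type `B`, where no root of `Ψ` is orthogonal to `θ_s = ε_1`), and `θ ⟂ μ` are long roots of the
same length. Hence the roots of `S ∖ {θ_s}` are orthogonal to `θ` and `μ`; in particular neither
`θ` nor `μ` lies in `S`, which gives the count of short and long roots.
-/

open scoped Classical RealInnerProductSpace

/-- The standard basis vector `ε_i` of `ℝ^n`. -/
noncomputable def eps (n : ℕ) (i : Fin n) : EuclideanSpace ℝ (Fin n) :=
  EuclideanSpace.single i (1 : ℝ)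

/-- The abelian nilradical of type `B_{n+2}`: `Ψ = {ε_1} ∪ {ε_1 ± ε_j : j ≥ 2}`. -/
def PsiB (n : ℕ) : Set (EuclideanSpace ℝ (Fin (n + 2))) :=
  {v | v = eps (n + 2) 0 ∨
    ∃ j : Fin (n + 2), j ≠ 0 ∧ (v = eps (n + 2) 0 + eps (n + 2) j ∨
      v = eps (n + 2) 0 - eps (n + 2) j)}

/-- The abelian nilradical of type `C_{n+2}`: `Ψ = {ε_i + ε_j : 1 ≤ i ≤ j ≤ n}`. -/
def PsiC (n : ℕ) : Set (EuclideanSpace ℝ (Fin (n + 2))) :=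
  {v | ∃ i j : Fin (n + 2), v = eps (n + 2) i + eps (n + 2) j}

namespace Finset

variable {α : Type*} [DecidableEq α] (p : α → Prop) [DecidablePred p] {S : Finset α}
  {a b c : α}

lemma card_filter_insert_insert_erase_of_not (ha : a ∈ S) (hpa : p a) (hb : ¬p b)
    (hc : ¬p c) :
    ((insert b (insert c (S.erase a))).filter p).card = (S.filter p).card - 1 := by
  rw [filter_insert, if_neg hb, filter_insert, if_neg hc, filter_erase,
    card_erase_of_mem (mem_filter.2 ⟨ha, hpa⟩)]

lemma card_filter_insert_insert_erase_of_pos (hpa : ¬p a) (hb : p b) (hc : p c) (hbc : b ≠ c)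
    (hbS : b ∉ S) (hcS : c ∉ S) :
    ((insert b (insert c (S.erase a))).filter p).card = (S.filter p).card + 2 := by
  rw [filter_insert, if_pos hb, filter_insert, if_pos hc, filter_erase,
    erase_eq_of_notMem fun h => hpa (mem_filter.1 h).2,
    card_insert_of_notMem fun h => (mem_insert.1 h).elim hbc fun h => hbS (mem_filter.1 h).1,
    card_insert_of_notMem fun h => hcS (mem_filter.1 h).1]

end Finset

section Exchange

variable {V : Type*} [NormedAddCommGroup V] [InnerProductSpace ℝ V]

lemma orthogonalSet_insert {a : V} {S : Set V} :
    OrthogonalSet (insert a S) ↔ OrthogonalSet S ∧ ∀ b ∈ S, a ≠ b → ⟪a, b⟫ = 0 :=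
  haveI : Std.Symm fun x y : V => ⟪x, y⟫ = 0 := ⟨fun _ _ h => by rwa [real_inner_comm]⟩
  Set.pairwise_insert_of_symm (r := fun x y : V => ⟪x, y⟫ = 0)

theorem exchange_orthogonal [DecidableEq V] {Ψ : Set V} {θs θ μ : V} (hθ : θ ≠ 0)
    (hθΨ : θ ∈ Ψ) (hμΨ : μ ∈ Ψ) (hθμ : ⟪θ, μ⟫ = 0) (hμθ : ‖μ‖ = ‖θ‖) (hθθs : ‖θ‖ ≠ ‖θs‖)
    (hperp : ∀ v ∈ Ψ, ⟪θs, v⟫ = 0 → ⟪θ, v⟫ = 0 ∧ ⟪μ, v⟫ = 0)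
    {S : Finset V} (hSΨ : ↑S ⊆ Ψ) (horth : OrthogonalSet (↑S : Set V)) (hθs : θs ∈ S) :
    (↑(insert θ (insert μ (S.erase θs))) : Set V) ⊆ Ψ ∧
    OrthogonalSet (↑(insert θ (insert μ (S.erase θs))) : Set V) ∧
    ((insert θ (insert μ (S.erase θs))).filter (fun v => ‖v‖ = ‖θs‖)).card =
      (S.filter (fun v => ‖v‖ = ‖θs‖)).card - 1 ∧
    ((insert θ (insert μ (S.erase θs))).filter (fun v => ‖v‖ = ‖θ‖)).card =
      (S.filter (fun v => ‖v‖ = ‖θ‖)).card + 2 := by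
  have hμ : μ ≠ 0 := norm_ne_zero_iff.1 (hμθ ▸ norm_ne_zero_iff.2 hθ)
  have hperpS : ∀ α ∈ S.erase θs, ⟪θ, α⟫ = 0 ∧ ⟪μ, α⟫ = 0 := fun α hα =>
    hperp α (hSΨ (Finset.mem_of_mem_erase hα))
      (horth θs hθs α (Finset.mem_of_mem_erase hα) (Finset.ne_of_mem_erase hα).symm)
  have hnotMem : ∀ v, v ≠ 0 → v ≠ θs → (∀ α ∈ S.erase θs, ⟪v, α⟫ = 0) → v ∉ S :=
    fun v hv hvθs h hvS => hv (inner_self_eq_zero.1 (h v (Finset.mem_erase.2 ⟨hvθs, hvS⟩)))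
  have hθθs' : θ ≠ θs := fun h => hθθs (congrArg norm h)
  have hμθs : μ ≠ θs := fun h => hθθs (hμθ ▸ congrArg norm h)
  refine ⟨?_, ?_, ?_, ?_⟩
  · simp only [Finset.coe_insert, Set.insert_subset_iff]
    exact ⟨hθΨ, hμΨ, (Finset.coe_subset.2 (S.erase_subset θs)).trans hSΨ⟩
  · simp only [Finset.coe_insert, orthogonalSet_insert, Set.mem_insert_iff, Finset.mem_coe]
    refine ⟨⟨fun α hα β hβ =>
      horth α (Finset.mem_of_mem_erase hα) β (Finset.mem_of_mem_erase hβ),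
      fun α hα _ => (hperpS α hα).2⟩, ?_⟩
    rintro α (rfl | hα) _
    · exact hθμ
    · exact (hperpS α hα).1
  · exact Finset.card_filter_insert_insert_erase_of_not _ hθs rfl hθθs (hμθ ▸ hθθs)
  · exact Finset.card_filter_insert_insert_erase_of_pos _ (Ne.symm hθθs) rfl hμθ
      (fun h => hθ (inner_self_eq_zero.1 (by rwa [← h] at hθμ)))
      (hnotMem θ hθ hθθs' fun α hα => (hperpS α hα).1)
      (hnotMem μ hμ hμθs fun α hα => (hperpS α hα).2)

end Exchange

section Coordinates

variable {n : ℕ}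

lemma inner_eps_left (i : Fin n) (v : EuclideanSpace ℝ (Fin n)) : ⟪eps n i, v⟫ = v i := by
  simp [eps, EuclideanSpace.inner_single_left]

lemma eps_apply (i j : Fin n) : eps n i j = if j = i then 1 else 0 := by
  simp [eps]

lemma inner_eps_add_self (i : Fin n) (v : EuclideanSpace ℝ (Fin n)) :
    ⟪eps n i + eps n i, v⟫ = 2 * v i := by
  rw [inner_add_left, inner_eps_left]
  ring

lemma inner_eps_eps_of_ne {i j : Fin n} (h : i ≠ j) : ⟪eps n i, eps n j⟫ = 0 := by
  simp [inner_eps_left, eps_apply, h]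

lemma norm_eps (i : Fin n) : ‖eps n i‖ = 1 := by
  simp [eps]

lemma norm_eps_add_eps_of_ne {i j : Fin n} (h : i ≠ j) : ‖eps n i + eps n j‖ = √2 := by
  have := norm_add_sq_eq_norm_sq_add_norm_sq_real (inner_eps_eps_of_ne h)
  rw [norm_eps, norm_eps] at this
  rw [← Real.sqrt_mul_self (norm_nonneg _), this]
  norm_num

lemma norm_eps_sub_eps_of_ne {i j : Fin n} (h : i ≠ j) : ‖eps n i - eps n j‖ = √2 := by
  rw [norm_sub_eq_norm_add (inner_eps_eps_of_ne h.symm), norm_eps_add_eps_of_ne h]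

lemma norm_eps_add_self (i : Fin n) : ‖eps n i + eps n i‖ = 2 := by
  rw [← two_smul ℝ, norm_smul, norm_eps]
  norm_num

end Coordinates

lemma PsiB.apply_zero {n : ℕ} {v : EuclideanSpace ℝ (Fin (n + 2))} (hv : v ∈ PsiB n) :
    v 0 = 1 := by
  rcases hv with rfl | ⟨j, hj, rfl | rfl⟩
  · simp [eps_apply]
  all_goals simp [eps_apply, Ne.symm hj]

lemma PsiC.apply_nonneg {n : ℕ} {v : EuclideanSpace ℝ (Fin (n + 2))} (hv : v ∈ PsiC n)
    (k : Fin (n + 2)) : 0 ≤ v k := by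
  obtain ⟨i, j, rfl⟩ := hv
  simp only [PiLp.add_apply, eps_apply]
  split_ifs <;> norm_num

lemma PsiC.apply_eq_zero_of_inner_eq_zero {n : ℕ} {v : EuclideanSpace ℝ (Fin (n + 2))}
    (hv : v ∈ PsiC n) {i j : Fin (n + 2)} (h : ⟪eps (n + 2) i + eps (n + 2) j, v⟫ = 0) :
    v i = 0 ∧ v j = 0 := by
  rw [inner_add_left, inner_eps_left, inner_eps_left] at h
  have := PsiC.apply_nonneg hv i
  have := PsiC.apply_nonneg hv j
  constructor <;> linarith

/-- in the non-simply-laced cases `B`, `C` with abelian nilradical `Ψ`,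
if `S ⊆ Ψ` is orthogonal and contains the highest short root `θ_s` of `Ψ`, then
`S' = (S ∖ {θ_s}) ∪ {θ, 2θ_s - θ}` is an orthogonal subset of `Ψ` with one fewer short root
and two more long roots. -/
theorem stmt13 (n : ℕ)
    (Ψ : Set (EuclideanSpace ℝ (Fin (n + 2)))) (θs θ : EuclideanSpace ℝ (Fin (n + 2)))
    (hcase :
      (Ψ = PsiB n ∧ θs = eps (n + 2) 0 ∧ θ = eps (n + 2) 0 + eps (n + 2) 1) ∨
      (Ψ = PsiC n ∧ θs = eps (n + 2) 0 + eps (n + 2) 1 ∧ θ = eps (n + 2) 0 + eps (n + 2) 0))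
    (S : Finset (EuclideanSpace ℝ (Fin (n + 2)))) (hSΨ : ↑S ⊆ Ψ)
    (horth : OrthogonalSet (↑S : Set (EuclideanSpace ℝ (Fin (n + 2)))))
    (hθs : θs ∈ S) :
    (↑(insert θ (insert ((2 : ℝ) • θs - θ) (S.erase θs))) :
        Set (EuclideanSpace ℝ (Fin (n + 2)))) ⊆ Ψ ∧
    OrthogonalSet (↑(insert θ (insert ((2 : ℝ) • θs - θ) (S.erase θs))) :
        Set (EuclideanSpace ℝ (Fin (n + 2)))) ∧
    ((insert θ (insert ((2 : ℝ) • θs - θ) (S.erase θs))).filter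
        (fun v => ‖v‖ = ‖θs‖)).card = (S.filter (fun v => ‖v‖ = ‖θs‖)).card - 1 ∧
    ((insert θ (insert ((2 : ℝ) • θs - θ) (S.erase θs))).filter
        (fun v => ‖v‖ = ‖θ‖)).card = (S.filter (fun v => ‖v‖ = ‖θ‖)).card + 2 := by
  have h01 : (0 : Fin (n + 2)) ≠ 1 := by simp
  rcases hcase with ⟨rfl, rfl, rfl⟩ | ⟨rfl, rfl, rfl⟩
  · rw [show (2 : ℝ) • eps (n + 2) 0 - (eps (n + 2) 0 + eps (n + 2) 1) =
      eps (n + 2) 0 - eps (n + 2) 1 by module]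
    refine exchange_orthogonal ?_ ?_ ?_ ?_ ?_ ?_ ?_ hSΨ horth hθs
    · rw [← norm_ne_zero_iff, norm_eps_add_eps_of_ne h01]
      positivity
    · exact Or.inr ⟨1, h01.symm, Or.inl rfl⟩
    · exact Or.inr ⟨1, h01.symm, Or.inr rfl⟩
    · rw [real_inner_add_sub_eq_zero_iff, norm_eps, norm_eps]
    · rw [norm_eps_sub_eps_of_ne h01, norm_eps_add_eps_of_ne h01]
    · rw [norm_eps_add_eps_of_ne h01, norm_eps]
      norm_num
    · intro v hv h
      rw [inner_eps_left, PsiB.apply_zero hv] at h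
      exact absurd h one_ne_zero
  · rw [show (2 : ℝ) • (eps (n + 2) 0 + eps (n + 2) 1) - (eps (n + 2) 0 + eps (n + 2) 0) =
      eps (n + 2) 1 + eps (n + 2) 1 by module]
    refine exchange_orthogonal ?_ ?_ ?_ ?_ ?_ ?_ ?_ hSΨ horth hθs
    · rw [← norm_ne_zero_iff, norm_eps_add_self]
      norm_num
    · exact ⟨0, 0, rfl⟩
    · exact ⟨1, 1, rfl⟩
    · simp [inner_eps_add_self, eps_apply]
    · rw [norm_eps_add_self, norm_eps_add_self]
    · rw [norm_eps_add_self, norm_eps_add_eps_of_ne h01]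
      exact ((Real.sqrt_lt' two_pos).2 (by norm_num)).ne'
    · intro v hv h
      obtain ⟨hv0, hv1⟩ := PsiC.apply_eq_zero_of_inner_eq_zero hv h
      rw [inner_eps_add_self, inner_eps_add_self, hv0, hv1]
      norm_num
end

section
/- Let S ⊂ Φ be a set of pairwise strongly orthogonal roots in a finite root system and let γ ∈ Φ be such that Σ_{α∈S}⟨γ, α^∨⟩ is maximal among all roots. Let S_0 = {α ∈ S : ⟨γ, α^∨⟩ > 0}. Then Σ_{α∈S}⟨γ, α^∨⟩ ≤ Σ_{α∈S_0}⟨γ, α^∨⟩, and the set S_0 ∪ {−γ} has the property that the matrix (⟨α, β^∨⟩)_{α,β ∈ S_0∪{−γ}} is a generalized Cartan matrix (diagonal entries 2, off-diagonal entries nonpositive integers, with ⟨α,β^∨⟩ = 0 iff ⟨β,α^∨⟩ = 0). -/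
open scoped Classical RealInnerProductSpace

/-!
Dropping the nonpositive terms can only increase the sum, and the Cartan-matrix property is a
sign statement about inner products. The entries against `-γ` are negative because `γ` pairs
positively with `S₀`. Two distinct roots of `S₀` are orthogonal: a positive (resp. negative)
inner product of two roots forces their difference (resp. sum) to be a root, which strong
orthogonality forbids, and `α = -β` is excluded since both pair positively with `γ`.
-/

theorem Finset.sum_le_sum_filter_pos {ι M : Type*} [AddCommMonoid M] [LinearOrder M]
    [IsOrderedAddMonoid M] (s : Finset ι) (f : ι → M) :
    ∑ i ∈ s, f i ≤ ∑ i ∈ s.filter (fun i => 0 < f i), f i := by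
  rw [← s.sum_filter_add_sum_filter_not (fun i => 0 < f i)]
  exact add_le_of_nonpos_right
    (Finset.sum_nonpos fun i hi => not_lt.mp (Finset.mem_filter.mp hi).2)

section Pairing

variable {V : Type*} [NormedAddCommGroup V] [InnerProductSpace ℝ V]

theorem pairing_self_s17 {a : V} (ha : a ≠ 0) : pairing a a = 2 := by
  rw [pairing, mul_div_assoc, div_self (inner_self_ne_zero.mpr ha), mul_one]

theorem pairing_pos_iff {a b : V} (hb : b ≠ 0) : 0 < pairing a b ↔ 0 < ⟪a, b⟫ := by
  rw [pairing, div_pos_iff_of_pos_right (real_inner_self_pos.mpr hb)]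
  constructor <;> intro h <;> linarith

theorem pairing_nonpos_iff {a b : V} (hb : b ≠ 0) : pairing a b ≤ 0 ↔ ⟪a, b⟫ ≤ 0 := by
  simpa only [not_lt] using (pairing_pos_iff hb).not

theorem pairing_eq_zero_iff {a b : V} (hb : b ≠ 0) : pairing a b = 0 ↔ ⟪a, b⟫ = 0 := by
  rw [pairing, div_eq_zero_iff, or_iff_left (inner_self_ne_zero.mpr hb)]
  constructor <;> intro h <;> linarith

theorem pairing_eq_zero_comm {a b : V} (ha : a ≠ 0) (hb : b ≠ 0) :
    pairing a b = 0 ↔ pairing b a = 0 := by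
  rw [pairing_eq_zero_iff hb, pairing_eq_zero_iff ha, real_inner_comm]

end Pairing

namespace IsRootSystem

variable {V : Type*} [NormedAddCommGroup V] [InnerProductSpace ℝ V] {Φ : Set V}

/-- If neither `⟨α, β^∨⟩` nor `⟨β, α^∨⟩` equals `1`, both are integers `≥ 2`, which gives
`|α|² + |β|² ≤ 2(α, β)`, i.e. `|α - β|² ≤ 0`. -/
theorem sub_mem_of_inner_pos (hΦ : IsRootSystem Φ) {α β : V} (hα : α ∈ Φ) (hβ : β ∈ Φ)
    (hpos : 0 < ⟪α, β⟫) (hne : α ≠ β) : α - β ∈ Φ := by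
  have hα0 := hΦ.ne_zero α hα
  have hβ0 := hΦ.ne_zero β hβ
  obtain ⟨m, hm⟩ := hΦ.crystal β hβ α hα
  obtain ⟨n, hn⟩ := hΦ.crystal α hα β hβ
  have hm0 : (0 : ℝ) < m := hm ▸ (pairing_pos_iff hβ0).mpr hpos
  have hn0 : (0 : ℝ) < n := hn ▸ (pairing_pos_iff hα0).mpr (real_inner_comm α β ▸ hpos)
  norm_cast at hm0 hn0
  by_cases hm1 : m = 1
  · simpa [hm, hm1] using hΦ.reflect_mem β hβ α hα
  by_cases hn1 : n = 1
  · simpa [hn, hn1] using hΦ.neg_mem _ (hΦ.reflect_mem α hα β hβ)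
  exfalso
  have hm2 : (2 : ℝ) ≤ pairing α β := hm ▸ by exact_mod_cast (by omega : (2 : ℤ) ≤ m)
  have hn2 : (2 : ℝ) ≤ pairing β α := hn ▸ by exact_mod_cast (by omega : (2 : ℤ) ≤ n)
  rw [pairing, le_div_iff₀ (real_inner_self_pos.mpr hβ0)] at hm2
  rw [pairing, le_div_iff₀ (real_inner_self_pos.mpr hα0), real_inner_comm α β] at hn2
  have hexpand : ⟪α - β, α - β⟫ = ⟪α, α⟫ - 2 * ⟪α, β⟫ + ⟪β, β⟫ := by
    rw [real_inner_sub_sub_self]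
  have := real_inner_self_pos.mpr (sub_ne_zero.mpr hne)
  linarith

theorem inner_eq_zero_of_add_notMem_of_sub_notMem (hΦ : IsRootSystem Φ) {α β : V}
    (hα : α ∈ Φ) (hβ : β ∈ Φ) (hne : α ≠ β) (hne' : α ≠ -β)
    (hadd : α + β ∉ Φ) (hsub : α - β ∉ Φ) : ⟪α, β⟫ = 0 := by
  rcases lt_trichotomy ⟪α, β⟫ 0 with hlt | heq | hgt
  · refine absurd ?_ hadd
    simpa using hΦ.sub_mem_of_inner_pos hα (hΦ.neg_mem β hβ) (by simpa using hlt) hne'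
  · exact heq
  · exact absurd (hΦ.sub_mem_of_inner_pos hα hβ hgt hne) hsub

theorem inner_nonpos_of_mem_insert_neg_filter (hΦ : IsRootSystem Φ) {S : Finset V}
    (hSΦ : ↑S ⊆ Φ) (hso : StronglyOrthogonal Φ ↑S) (γ : V) {a b : V}
    (ha : a ∈ insert (-γ) (S.filter (fun α => 0 < pairing γ α)))
    (hb : b ∈ insert (-γ) (S.filter (fun α => 0 < pairing γ α))) (hne : a ≠ b) :
    ⟪a, b⟫ ≤ 0 := by
  have pos_of_mem {c : V} (hc : c ∈ S) (hpos : 0 < pairing γ c) : 0 < ⟪γ, c⟫ :=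
    (pairing_pos_iff (hΦ.ne_zero c (hSΦ hc))).mp hpos
  simp only [Finset.mem_insert, Finset.mem_filter] at ha hb
  rcases ha with rfl | ⟨haS, hapos⟩ <;> rcases hb with rfl | ⟨hbS, hbpos⟩
  · exact absurd rfl hne
  · simpa using (pos_of_mem hbS hbpos).le
  · simpa [real_inner_comm] using (pos_of_mem haS hapos).le
  · have hne' : a ≠ -b := by
      rintro rfl
      linarith [pos_of_mem haS hapos, pos_of_mem hbS hbpos, inner_neg_right (𝕜 := ℝ) γ b]
    obtain ⟨hadd, hsub⟩ := hso a haS b hbS hne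
    exact (hΦ.inner_eq_zero_of_add_notMem_of_sub_notMem (hSΦ haS) (hSΦ hbS) hne hne'
      hadd hsub).le

end IsRootSystem

theorem stmt17_general {V : Type*} [NormedAddCommGroup V] [InnerProductSpace ℝ V]
    (Φ : Set V) (hΦ : IsRootSystem Φ) (S : Finset V) (hSΦ : ↑S ⊆ Φ)
    (hso : StronglyOrthogonal Φ ↑S) (γ : V) (hγ : γ ∈ Φ) :
    (∑ α ∈ S, pairing γ α ≤ ∑ α ∈ S.filter (fun α => 0 < pairing γ α), pairing γ α) ∧
    (∀ a ∈ insert (-γ) (S.filter (fun α => 0 < pairing γ α)), pairing a a = 2) ∧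
    (∀ a ∈ insert (-γ) (S.filter (fun α => 0 < pairing γ α)),
      ∀ b ∈ insert (-γ) (S.filter (fun α => 0 < pairing γ α)), a ≠ b →
        pairing a b ≤ 0 ∧ (∃ n : ℤ, pairing a b = n) ∧ (pairing a b = 0 ↔ pairing b a = 0)) := by
  have mem_Φ : ∀ a ∈ insert (-γ) (S.filter (fun α => 0 < pairing γ α)), a ∈ Φ := by
    simp only [Finset.mem_insert, Finset.mem_filter]
    rintro a (rfl | ⟨haS, -⟩)
    exacts [hΦ.neg_mem γ hγ, hSΦ haS]
  refine ⟨S.sum_le_sum_filter_pos _, fun a ha => pairing_self_s17 (hΦ.ne_zero a (mem_Φ a ha)), ?_⟩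
  intro a ha b hb hne
  have hb0 := hΦ.ne_zero b (mem_Φ b hb)
  exact ⟨(pairing_nonpos_iff hb0).mpr
      (hΦ.inner_nonpos_of_mem_insert_neg_filter hSΦ hso γ ha hb hne),
    hΦ.crystal b (mem_Φ b hb) a (mem_Φ a ha),
    pairing_eq_zero_comm (hΦ.ne_zero a (mem_Φ a ha)) hb0⟩

/-- if `S` is strongly orthogonal and `γ ∈ Φ` maximizes `∑_{α ∈ S} ⟨γ, α^∨⟩`,
and `S₀ = {α ∈ S : ⟨γ, α^∨⟩ > 0}`, then the sum over `S` is at most the sum over `S₀`, and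
the matrix `(⟨a, b^∨⟩)` on `S₀ ∪ {-γ}` is a generalized Cartan matrix. -/
theorem stmt17 {V : Type*} [NormedAddCommGroup V] [InnerProductSpace ℝ V]
    (Φ : Set V) (hΦ : IsRootSystem Φ) (S : Finset V) (hSΦ : ↑S ⊆ Φ)
    (hso : StronglyOrthogonal Φ ↑S) (γ : V) (hγ : γ ∈ Φ)
    (hmax : ∀ η ∈ Φ, ∑ α ∈ S, pairing η α ≤ ∑ α ∈ S, pairing γ α) :
    (∑ α ∈ S, pairing γ α ≤ ∑ α ∈ S.filter (fun α => 0 < pairing γ α), pairing γ α) ∧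
    (∀ a ∈ insert (-γ) (S.filter (fun α => 0 < pairing γ α)), pairing a a = 2) ∧
    (∀ a ∈ insert (-γ) (S.filter (fun α => 0 < pairing γ α)),
      ∀ b ∈ insert (-γ) (S.filter (fun α => 0 < pairing γ α)), a ≠ b →
        pairing a b ≤ 0 ∧ (∃ n : ℤ, pairing a b = n) ∧ (pairing a b = 0 ↔ pairing b a = 0)) :=
  stmt17_general Φ hΦ S hSΦ hso γ hγ
end
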